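/- Let μ ∈ ℝ, σ > 0, t ∈ ℝ and σ_γ > 0, and let W, N, N′ be independent standard normal random variables. Then the expected threshold-weighted CRPS of the Gaussian distribution Φ_{μ,σ²}, with Gaussian weighting measure γ₂ centered at t with scale σ_γ, satisfies CRPS_{γ₂}(Φ_{μ,σ²}) = P( μ − t + σ_γ·W + σ·N ≤ 0 and t − μ − σ_γ·W + σ·N′ ≤ 0 ). (This is the bivariate Gaussian CDF at (0,0) with means (μ−t, t−μ), both variances σ_γ²+σ², and covariance −σ_γ².) -/

import Mathlib

open MeasureTheory ProbabilityTheory Set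
noncomputable section
def stdNormal : Measure ℝ := gaussianReal 0 1
def Phi (x : ℝ) : ℝ := (stdNormal (Iic x)).toReal
def stdPDF (x : ℝ) : ℝ := (Real.sqrt (2 * Real.pi))⁻¹ * Real.exp (-(x ^ 2) / 2)
def normCDF (μ σ : ℝ) (u : ℝ) : ℝ := Phi ((u - μ) / σ)
def gaussMeasure (μ σ : ℝ) : Measure ℝ := gaussianReal μ ⟨σ ^ 2, sq_nonneg σ⟩
def twCRPS (γ : Measure ℝ) (F : ℝ → ℝ) (y : ℝ) : ℝ :=
  ∫ u, (F u - (Ici y).indicator (fun _ => (1 : ℝ)) u) ^ 2 ∂γ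
def etwCRPS (γ : Measure ℝ) (μ σ : ℝ) : ℝ :=
  ∫ y, twCRPS γ (normCDF μ σ) y ∂(gaussMeasure μ σ)
def gamma1 (t : ℝ) : Measure ℝ :=
  volume.withDensity ((Ici t).indicator fun _ => (1 : ENNReal))
def gamma2 (t σγ : ℝ) : Measure ℝ :=
  volume.withDensity fun u => ENNReal.ofReal (1 / σγ * stdPDF ((u - t) / σγ))
end

noncomputable section
open scoped ENNReal NNReal

instance : IsProbabilityMeasure stdNormal := by
  unfold stdNormal; infer_instance

lemma stdNormal_map_affine (a b : ℝ) :
    stdNormal.map (fun x => a * x + b) = gaussianReal b ⟨a ^ 2, sq_nonneg a⟩ := by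
  have h1 : stdNormal.map (fun x => a * x) = gaussianReal 0 ⟨a ^ 2, sq_nonneg a⟩ := by
    have := gaussianReal_map_const_mul (μ := 0) (v := 1) a
    simp [stdNormal] at this
    exact this
  have : (fun x : ℝ => a * x + b) = (· + b) ∘ (fun x => a * x) := rfl
  rw [this, ← Measure.map_map (by fun_prop) (by fun_prop), h1,
    gaussianReal_map_add_const (v := ⟨a ^ 2, sq_nonneg a⟩), zero_add]

lemma gamma2_eq (t : ℝ) {σγ : ℝ} (hσγ : 0 < σγ) :
    gamma2 t σγ = gaussianReal t ⟨σγ ^ 2, sq_nonneg σγ⟩ := by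
  rw [gamma2]
  have hv : (⟨σγ ^ 2, sq_nonneg σγ⟩ : ℝ≥0) ≠ 0 := by
    exact fun h => (pow_pos hσγ 2).ne' (congrArg Subtype.val h)
  rw [gaussianReal_of_var_ne_zero _ hv]
  congr 1
  ext u
  unfold gaussianPDF gaussianPDFReal stdPDF
  congr 1
  have h2π : (0:ℝ) < 2 * Real.pi := by positivity
  have hs : Real.sqrt (2 * Real.pi * σγ ^ 2) = Real.sqrt (2 * Real.pi) * σγ := by
    rw [Real.sqrt_mul (le_of_lt h2π), Real.sqrt_sq hσγ.le]
  push_cast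
  change _ = (√(2 * Real.pi * σγ ^ 2))⁻¹ * Real.exp (-(u - t) ^ 2 / (2 * σγ ^ 2))
  rw [hs]
  have : ((u - t) / σγ) ^ 2 = (u - t) ^ 2 / σγ ^ 2 := by ring
  rw [this]
  field_simp

lemma stdNormal_Iic_ne_top (x : ℝ) : stdNormal (Iic x) ≠ ⊤ := measure_ne_top _ _

lemma phi_nonneg (x : ℝ) : 0 ≤ Phi x := ENNReal.toReal_nonneg

lemma phi_le_one (x : ℝ) : Phi x ≤ 1 := by
  unfold Phi
  rw [show (1:ℝ) = (1:ℝ≥0∞).toReal by simp]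
  exact ENNReal.toReal_mono (by simp) prob_le_one

lemma ofReal_phi (x : ℝ) : ENNReal.ofReal (Phi x) = stdNormal (Iic x) :=
  ENNReal.ofReal_toReal (stdNormal_Iic_ne_top x)

lemma measurable_Phi : Measurable Phi := by
  have : Monotone Phi := fun a b hab =>
    ENNReal.toReal_mono (stdNormal_Iic_ne_top b) (measure_mono (Iic_subset_Iic.2 hab))
  exact this.measurable

instance : NullSingletonClass stdNormal := by
  constructor
  intro x
  have := gaussianReal_absolutelyContinuous (0:ℝ) (v := 1) one_ne_zero
  exact this (measure_singleton x)

lemma stdNormal_Iic_neg (x : ℝ) : stdNormal (Iic (-x)) = 1 - stdNormal (Iic x) := by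
  have hmap : stdNormal.map (fun y : ℝ => -y) = stdNormal := by
    have := stdNormal_map_affine (-1) 0
    simp only [neg_one_mul, add_zero] at this
    rw [this]
    unfold stdNormal
    congr 1
    ext
    norm_num
    rfl
  calc stdNormal (Iic (-x)) = stdNormal.map (fun y : ℝ => -y) (Iic (-x)) := by rw [hmap]
    _ = stdNormal ((fun y : ℝ => -y) ⁻¹' Iic (-x)) :=
        Measure.map_apply measurable_neg measurableSet_Iic
    _ = stdNormal (Ici x) := by congr 1; ext y; simp
    _ = 1 - stdNormal (Iio x) := by
        rw [← prob_compl_eq_one_sub measurableSet_Iio, compl_Iio]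
    _ = 1 - stdNormal (Iic x) := by rw [measure_congr Iio_ae_eq_Iic]

lemma phi_neg (x : ℝ) : Phi (-x) = 1 - Phi x := by
  unfold Phi
  rw [stdNormal_Iic_neg, ENNReal.toReal_sub_of_le prob_le_one (by simp)]
  simp

lemma gaussMeasure_eq_map (μ : ℝ) {σ : ℝ} (hσ : 0 < σ) :
    gaussMeasure μ σ = stdNormal.map (fun x => σ * x + μ) := by
  rw [stdNormal_map_affine]; rfl

lemma gaussMeasure_Iic (μ : ℝ) {σ : ℝ} (hσ : 0 < σ) (u : ℝ) :
    gaussMeasure μ σ (Iic u) = stdNormal (Iic ((u - μ) / σ)) := by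
  rw [gaussMeasure_eq_map μ hσ, Measure.map_apply (by fun_prop) measurableSet_Iic]
  congr 1
  ext x
  simp only [mem_preimage, mem_Iic]
  rw [le_div_iff₀ hσ]
  constructor <;> intro h <;> linarith

instance (μ σ : ℝ) : IsProbabilityMeasure (gaussMeasure μ σ) := by
  unfold gaussMeasure; exact instIsProbabilityMeasureGaussianReal μ _

lemma gaussMeasure_Iic' (μ : ℝ) {σ : ℝ} (hσ : 0 < σ) (u : ℝ) :
    gaussMeasure μ σ (Iic u) = ENNReal.ofReal (normCDF μ σ u) := by
  rw [gaussMeasure_Iic μ hσ, ← ofReal_phi]; rfl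

lemma gaussMeasure_Ioi (μ : ℝ) {σ : ℝ} (hσ : 0 < σ) (u : ℝ) :
    gaussMeasure μ σ (Ioi u) = ENNReal.ofReal (1 - normCDF μ σ u) := by
  have h1 : gaussMeasure μ σ (Ioi u) = 1 - gaussMeasure μ σ (Iic u) := by
    rw [← prob_compl_eq_one_sub measurableSet_Iic, compl_Iic]
  rw [h1, gaussMeasure_Iic' μ hσ, ← ENNReal.ofReal_one]
  exact (ENNReal.ofReal_sub 1 (phi_nonneg ((u - μ) / σ))).symm

end

open scoped ENNReal NNReal in
theorem stmt_5 (μ σ t σγ : ℝ) (hσ : 0 < σ) (hσγ : 0 < σγ) :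
    etwCRPS (gamma2 t σγ) μ σ =
      ((stdNormal.prod (stdNormal.prod stdNormal))
        {p : ℝ × ℝ × ℝ |
          μ - t + σγ * p.1 + σ * p.2.1 ≤ 0 ∧ t - μ - σγ * p.1 + σ * p.2.2 ≤ 0}).toReal := by
  set γ : Measure ℝ := gamma2 t σγ with hγdef
  have hγ : γ = gaussianReal t ⟨σγ ^ 2, sq_nonneg σγ⟩ := gamma2_eq t hσγ
  have : IsProbabilityMeasure γ := by rw [hγ]; exact instIsProbabilityMeasureGaussianReal t _
  set F : ℝ → ℝ := normCDF μ σ with hF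
  set P : Measure ℝ := gaussMeasure μ σ with hP
  have hF01 : ∀ u, 0 ≤ F u ∧ F u ≤ 1 := fun u => ⟨phi_nonneg _, phi_le_one _⟩
  have hFmeas : Measurable F := measurable_Phi.comp (by fun_prop)
  set g : ℝ → ℝ → ℝ := fun y u => (F u - (Ici y).indicator (fun _ => (1 : ℝ)) u) ^ 2
    with hg
  have hg01 : ∀ y u, 0 ≤ g y u ∧ g y u ≤ 1 := by
    intro y u
    obtain ⟨h0, h1⟩ := hF01 u
    by_cases h : y ≤ u
    · simp only [hg, indicator_of_mem (mem_Ici.2 h)]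
      constructor
      · positivity
      · nlinarith
    · simp only [hg, indicator_of_notMem (fun hm => h (mem_Ici.1 hm)), sub_zero]
      constructor
      · positivity
      · nlinarith
  have hgmeas : Measurable (fun p : ℝ × ℝ => g p.1 p.2) := by
    have hind : (fun p : ℝ × ℝ => (Ici p.1).indicator (fun _ => (1:ℝ)) p.2)
        = ({p : ℝ × ℝ | p.1 ≤ p.2}).indicator (fun _ => (1:ℝ)) := by
      ext p
      by_cases h : p.1 ≤ p.2
      · simp [indicator_of_mem, h, mem_Ici.2 h]
      · simp [indicator_of_notMem, h, fun hm => h (mem_Ici.1 hm)]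
    have : Measurable (fun p : ℝ × ℝ => (Ici p.1).indicator (fun _ => (1:ℝ)) p.2) := by
      rw [hind]
      exact Measurable.indicator measurable_const
        (measurableSet_le measurable_fst measurable_snd)
    exact ((hFmeas.comp measurable_snd).sub this).pow_const 2
  have hgjoint : Measurable (fun p : ℝ × ℝ => ENNReal.ofReal (g p.1 p.2)) :=
    hgmeas.ennreal_ofReal
  set G : ℝ → ℝ≥0∞ := fun y => ∫⁻ u, ENNReal.ofReal (g y u) ∂γ with hG
  have hGmeas : Measurable G := hgjoint.lintegral_prod_right'
  have hGle : ∀ y, G y ≤ 1 := by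
    intro y
    calc G y ≤ ∫⁻ _, 1 ∂γ := lintegral_mono fun u => by
            simpa using ENNReal.ofReal_le_ofReal (hg01 y u).2
      _ = 1 := by simp
  have hGne : ∀ y, G y ≠ ⊤ := fun y => ((hGle y).trans_lt (by norm_num)).ne
  -- Step 1: twCRPS as lintegral
  have h1 : ∀ y, twCRPS γ F y = (G y).toReal := by
    intro y
    rw [twCRPS, integral_eq_lintegral_of_nonneg_ae
      (Filter.Eventually.of_forall fun u => (hg01 y u).1)
      (hgmeas.comp measurable_prodMk_left).aestronglyMeasurable]
  -- Step 2/3: etwCRPS as double lintegral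
  have h2 : etwCRPS γ μ σ = (∫⁻ y, G y ∂P).toReal := by
    rw [etwCRPS, ← hF, ← hP]
    simp_rw [h1]
    rw [integral_eq_lintegral_of_nonneg_ae
      (Filter.Eventually.of_forall fun y => ENNReal.toReal_nonneg)
      hGmeas.ennreal_toReal.aestronglyMeasurable]
    congr 1
    exact lintegral_congr fun y => ENNReal.ofReal_toReal (hGne y)
  -- Step 4: Fubini swap
  have hswap : ∫⁻ y, G y ∂P = ∫⁻ u, ∫⁻ y, ENNReal.ofReal (g y u) ∂P ∂γ :=
    lintegral_lintegral_swap hgjoint.aemeasurable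
  -- Step 5: inner integral
  have h5 : ∀ u, (∫⁻ y, ENNReal.ofReal (g y u) ∂P)
      = stdNormal (Iic ((u - μ) / σ)) * stdNormal (Iic ((μ - u) / σ)) := by
    intro u
    have hsplit : ∀ y, ENNReal.ofReal (g y u)
        = (Iic u).indicator (fun _ => ENNReal.ofReal ((F u - 1) ^ 2)) y
          + (Ioi u).indicator (fun _ => ENNReal.ofReal (F u ^ 2)) y := by
      intro y
      by_cases h : y ≤ u
      · rw [indicator_of_mem (mem_Iic.2 h), indicator_of_notMem (by simpa using h),
          add_zero]
        simp only [hg]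
        rw [indicator_of_mem (mem_Ici.2 h)]
      · rw [indicator_of_notMem (by simpa using h),
          indicator_of_mem (mem_Ioi.2 (not_le.1 h)), zero_add]
        simp only [hg]
        rw [indicator_of_notMem (by simpa using h), sub_zero]
    have hFu0 := (hF01 u).1
    have hFu1 := (hF01 u).2
    calc ∫⁻ y, ENNReal.ofReal (g y u) ∂P
        = ∫⁻ y, ((Iic u).indicator (fun _ => ENNReal.ofReal ((F u - 1) ^ 2)) y
            + (Ioi u).indicator (fun _ => ENNReal.ofReal (F u ^ 2)) y) ∂P :=
          lintegral_congr hsplit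
      _ = ENNReal.ofReal ((F u - 1) ^ 2) * P (Iic u)
            + ENNReal.ofReal (F u ^ 2) * P (Ioi u) := by
          rw [lintegral_add_left (measurable_const.indicator measurableSet_Iic),
            lintegral_indicator_const measurableSet_Iic,
            lintegral_indicator_const measurableSet_Ioi]
      _ = ENNReal.ofReal ((F u - 1) ^ 2) * ENNReal.ofReal (F u)
            + ENNReal.ofReal (F u ^ 2) * ENNReal.ofReal (1 - F u) := by
          rw [hP, gaussMeasure_Iic' μ hσ, gaussMeasure_Ioi μ hσ, ← hF]
      _ = ENNReal.ofReal ((F u - 1) ^ 2 * F u + F u ^ 2 * (1 - F u)) := by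
          rw [← ENNReal.ofReal_mul (sq_nonneg _), ← ENNReal.ofReal_mul (sq_nonneg _),
            ← ENNReal.ofReal_add (by nlinarith) (by nlinarith)]
      _ = ENNReal.ofReal (F u * (1 - F u)) := by congr 1; ring
      _ = ENNReal.ofReal (F u) * ENNReal.ofReal (1 - F u) :=
          ENNReal.ofReal_mul hFu0
      _ = stdNormal (Iic ((u - μ) / σ)) * stdNormal (Iic ((μ - u) / σ)) := by
          have e1 : F u = Phi ((u - μ) / σ) := by rw [hF]; rfl
          have e2 : (1 : ℝ) - F u = Phi ((μ - u) / σ) := by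
            have := phi_neg ((u - μ) / σ)
            have hx : -((u - μ) / σ) = (μ - u) / σ := by ring
            rw [hx] at this
            rw [e1, ← this]
          rw [e2, e1, ofReal_phi, ofReal_phi]
  -- Step 6: change of variables u = t - σγ w
  have hγmap : γ = stdNormal.map (fun w => -σγ * w + t) := by
    rw [hγ, stdNormal_map_affine]
    congr 1
    exact Subtype.ext (by simp)
  have hmono' : Monotone (fun x : ℝ => stdNormal (Iic x)) :=
    fun a b hab => measure_mono (Iic_subset_Iic.2 hab)
  have hmono : Measurable (fun x : ℝ => stdNormal (Iic x)) := hmono'.measurable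
  have hhmeas : Measurable (fun u : ℝ =>
      stdNormal (Iic ((u - μ) / σ)) * stdNormal (Iic ((μ - u) / σ))) :=
    (hmono.comp (by fun_prop)).mul (hmono.comp (by fun_prop))
  have h6 : ∫⁻ u, stdNormal (Iic ((u - μ) / σ)) * stdNormal (Iic ((μ - u) / σ)) ∂γ
      = ∫⁻ w, stdNormal (Iic ((t - μ - σγ * w) / σ))
          * stdNormal (Iic ((μ - t + σγ * w) / σ)) ∂stdNormal := by
    rw [hγmap, lintegral_map hhmeas (by fun_prop)]
    refine lintegral_congr fun w => ?_
    have e1 : (-σγ * w + t - μ) / σ = (t - μ - σγ * w) / σ := by ring_nf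
    have e2 : (μ - (-σγ * w + t)) / σ = (μ - t + σγ * w) / σ := by ring_nf
    rw [e1, e2]
  -- Step 7: RHS as lintegral
  have hS : MeasurableSet {p : ℝ × ℝ × ℝ |
      μ - t + σγ * p.1 + σ * p.2.1 ≤ 0 ∧ t - μ - σγ * p.1 + σ * p.2.2 ≤ 0} := by
    simp only [setOf_and]
    exact (measurableSet_le (by fun_prop) measurable_const).inter
      (measurableSet_le (by fun_prop) measurable_const)
  have h7 : (stdNormal.prod (stdNormal.prod stdNormal))
        {p : ℝ × ℝ × ℝ |
          μ - t + σγ * p.1 + σ * p.2.1 ≤ 0 ∧ t - μ - σγ * p.1 + σ * p.2.2 ≤ 0}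
      = ∫⁻ w, stdNormal (Iic ((t - μ - σγ * w) / σ))
          * stdNormal (Iic ((μ - t + σγ * w) / σ)) ∂stdNormal := by
    rw [Measure.prod_apply hS]
    refine lintegral_congr fun w => ?_
    have hpre : (Prod.mk w ⁻¹' {p : ℝ × ℝ × ℝ |
          μ - t + σγ * p.1 + σ * p.2.1 ≤ 0 ∧ t - μ - σγ * p.1 + σ * p.2.2 ≤ 0})
        = Iic ((t - μ - σγ * w) / σ) ×ˢ Iic ((μ - t + σγ * w) / σ) := by
      ext q
      simp only [mem_preimage, mem_setOf_eq, mem_prod, mem_Iic]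
      constructor
      · rintro ⟨ha, hb⟩
        constructor <;> rw [le_div_iff₀ hσ] <;> linarith
      · rintro ⟨ha, hb⟩
        rw [le_div_iff₀ hσ] at ha hb
        constructor <;> linarith
    rw [hpre, Measure.prod_prod]
  calc etwCRPS γ μ σ = (∫⁻ y, G y ∂P).toReal := h2
    _ = (∫⁻ u, ∫⁻ y, ENNReal.ofReal (g y u) ∂P ∂γ).toReal := by rw [hswap]
    _ = (∫⁻ u, stdNormal (Iic ((u - μ) / σ)) * stdNormal (Iic ((μ - u) / σ)) ∂γ).toReal := by
        rw [lintegral_congr h5]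
    _ = (∫⁻ w, stdNormal (Iic ((t - μ - σγ * w) / σ))
          * stdNormal (Iic ((μ - t + σγ * w) / σ)) ∂stdNormal).toReal := by rw [h6]
    _ = _ := by rw [← h7]
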